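/- For any m×n complex matrix ζ = (ζ_{kμ}), any point where g = (g₁,…,g_m) is a tuple of holomorphic functions with |g| > 0, and q ≥ 1, the following pointwise inequality holds: q·Σ_k Σ_{μ,ν} (∂²log|g|²/∂z_μ∂z̄_ν) ζ_{kμ} ζ̄_{kν} ≥ |g|²·|Σ_k Σ_μ ∂/∂z_μ(g_k/|g|²) ζ_{kμ}|², where q = min{n, m−1} (in fact it holds for q = m−1). -/

import Mathlib

/-!
Let `a = (∂g_k/∂z_μ)` and let `D` be the matrix of `∂/∂z_μ (g_k/|g|²)`, both at `z₀`. A direct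
computation gives `|g|² · Dᵀ Dᵀᴴ = H`, the complex Hessian of `log |g|²`, and `Dᵀ ḡ = 0`. With
`M = ζ Dᵀ` the two sides of the inequality become `|g|² |tr M|²` and `q |g|² ‖M‖²` (Frobenius
norm), so it suffices that `|tr M|² ≤ rank M · ‖M‖²` and `rank M ≤ q`. For the first, factor
`M = U X` where `U` has `rank M` orthonormal columns; then `‖X‖ = ‖M‖`, `‖U‖² = rank M`, and
Cauchy–Schwarz bounds `|tr (U X)|²` by `‖U‖² ‖X‖²`. For the second, `rank M ≤ n` since `ζ` has
`n` columns, and `rank M ≤ m - 1` since `M ḡ = 0` with `g(z₀) ≠ 0`.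
-/

open ComplexConjugate Matrix

theorem Complex.normSq_sum_mul_le {ι : Type*} (s : Finset ι) (x y : ι → ℂ) :
    Complex.normSq (∑ i ∈ s, x i * y i) ≤
      (∑ i ∈ s, Complex.normSq (x i)) * ∑ i ∈ s, Complex.normSq (y i) := by
  simp only [Complex.normSq_eq_norm_sq]
  calc ‖∑ i ∈ s, x i * y i‖ ^ 2 ≤ (∑ i ∈ s, ‖x i‖ * ‖y i‖) ^ 2 := by
        gcongr
        exact (norm_sum_le _ _).trans_eq (by simp only [norm_mul])
    _ ≤ _ := Finset.sum_mul_sq_le_sq_mul_sq _ _ _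

namespace Matrix

theorem rank_lt_card_width_of_mulVec_eq_zero {m n K : Type*} [Fintype n] [Field K]
    {A : Matrix m n K} {v : n → K} (hv : v ≠ 0) (hAv : A *ᵥ v = 0) :
    A.rank < Fintype.card n := by
  have hker : 0 < Module.finrank K (LinearMap.ker A.mulVecLin) :=
    Module.finrank_pos_iff_exists_ne_zero.mpr ⟨⟨v, hAv⟩, fun h => hv (congrArg Subtype.val h)⟩
  have := LinearMap.finrank_range_add_finrank_ker A.mulVecLin
  rw [Module.finrank_fintype_fun_eq_card] at this
  rw [rank]
  omega

variable {l m n : Type*} [Fintype l] [Fintype m] [Fintype n] [DecidableEq l]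

theorem ofReal_sum_normSq_eq_trace_conjTranspose_mul_self (A : Matrix m n ℂ) :
    ((∑ i, ∑ j, Complex.normSq (A i j) : ℝ) : ℂ) = (Aᴴ * A).trace := by
  simp only [trace, diag, mul_apply, conjTranspose_apply, Complex.star_def,
    ← Complex.normSq_eq_conj_mul_self, Complex.ofReal_sum]
  exact Finset.sum_comm

theorem sum_normSq_mul_of_conjTranspose_mul_self_eq_one {U : Matrix m l ℂ} (hU : Uᴴ * U = 1)
    (X : Matrix l n ℂ) :
    ∑ i, ∑ j, Complex.normSq ((U * X) i j) = ∑ i, ∑ j, Complex.normSq (X i j) := by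
  apply Complex.ofReal_injective
  simp only [ofReal_sum_normSq_eq_trace_conjTranspose_mul_self, conjTranspose_mul]
  rw [Matrix.mul_assoc, ← Matrix.mul_assoc Uᴴ, hU, Matrix.one_mul]

theorem sum_normSq_of_conjTranspose_mul_self_eq_one {U : Matrix m l ℂ} (hU : Uᴴ * U = 1) :
    ∑ i, ∑ j, Complex.normSq (U i j) = Fintype.card l := by
  apply Complex.ofReal_injective
  rw [ofReal_sum_normSq_eq_trace_conjTranspose_mul_self, hU, trace_one]
  norm_cast

theorem normSq_trace_mul_le (A : Matrix m n ℂ) (B : Matrix n m ℂ) :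
    Complex.normSq (A * B).trace ≤
      (∑ i, ∑ j, Complex.normSq (A i j)) * ∑ i, ∑ j, Complex.normSq (B i j) := by
  have h := Complex.normSq_sum_mul_le Finset.univ (fun p : m × n => A p.1 p.2)
    (fun p => B p.2 p.1)
  simp only [Fintype.sum_prod_type] at h
  rwa [Finset.sum_comm (f := fun i j => Complex.normSq (B j i))] at h

theorem exists_conjTranspose_mul_self_eq_one_and_eq_mul (A : Matrix m n ℂ) :
    ∃ (U : Matrix m (Fin A.rank) ℂ) (X : Matrix (Fin A.rank) n ℂ), Uᴴ * U = 1 ∧ A = U * X := by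
  set K : Submodule ℂ (EuclideanSpace ℂ m) :=
    (Submodule.span ℂ (Set.range A.col)).map (WithLp.linearEquiv 2 ℂ (m → ℂ)).symm.toLinearMap
  have hK : Module.finrank ℂ K = A.rank := by
    rw [rank_eq_finrank_span_cols]
    exact LinearEquiv.finrank_map_eq _ _
  let b := (stdOrthonormalBasis ℂ K).reindex (finCongr hK)
  have hcol : ∀ j, WithLp.toLp 2 (A.col j) ∈ K := fun j =>
    Submodule.mem_map_of_mem (Submodule.subset_span (Set.mem_range_self j))
  refine ⟨of fun i k => (b k : EuclideanSpace ℂ m) i,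
    of fun k j => inner ℂ (b k) (⟨_, hcol j⟩ : K), ?_, ?_⟩
  · ext k k'
    have := orthonormal_iff_ite.mp b.orthonormal k k'
    simp only [Submodule.coe_inner, PiLp.inner_apply, RCLike.inner_apply] at this
    simp [mul_apply, ← this, one_apply, mul_comm]
  · ext i j
    have := congrArg (fun v : K => (v : EuclideanSpace ℂ m) i) (b.sum_repr' ⟨_, hcol j⟩)
    simp only [Submodule.coe_sum, Submodule.coe_smul, WithLp.ofLp_sum, Finset.sum_apply] at this
    simpa [mul_apply, mul_comm] using this.symm

theorem normSq_trace_le_rank_mul_sum_normSq (A : Matrix n n ℂ) :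
    Complex.normSq A.trace ≤ A.rank * ∑ i, ∑ j, Complex.normSq (A i j) := by
  obtain ⟨U, X, hU, hA⟩ := exists_conjTranspose_mul_self_eq_one_and_eq_mul A
  calc Complex.normSq A.trace = Complex.normSq (U * X).trace := by rw [← hA]
    _ ≤ (∑ i, ∑ j, Complex.normSq (U i j)) * ∑ i, ∑ j, Complex.normSq (X i j) :=
        normSq_trace_mul_le U X
    _ = A.rank * ∑ i, ∑ j, Complex.normSq (A i j) := by
        rw [sum_normSq_of_conjTranspose_mul_self_eq_one hU, Fintype.card_fin,
          ← sum_normSq_mul_of_conjTranspose_mul_self_eq_one hU X, ← hA]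

theorem trace_mul_mul_conjTranspose (A : Matrix m n ℂ) (H : Matrix n n ℂ) :
    (A * H * Aᴴ).trace = ∑ k, ∑ μ, ∑ ν, H μ ν * A k μ * conj (A k ν) := by
  symm
  simp only [trace, diag, mul_apply, conjTranspose_apply, Complex.star_def, Finset.sum_mul]
  refine Finset.sum_congr rfl fun k _ => Finset.sum_comm.trans ?_
  exact Finset.sum_congr rfl fun ν _ => Finset.sum_congr rfl fun μ _ => by ring

end Matrix

section LeviForm

variable {m n : Type*} [Fintype m] (w : m → ℂ) (a : Matrix m n ℂ)

/-- `∂²log|g|²/∂z_μ∂z̄_ν` at a point where `g = w` and `∂g_k/∂z_μ = a k μ`. -/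
noncomputable def hessianLogNormSq : Matrix n n ℂ :=
  let G : ℂ := ((∑ k, Complex.normSq (w k) : ℝ) : ℂ)
  of fun μ ν => (G * ∑ k, a k μ * conj (a k ν) -
    (∑ k, a k μ * conj (w k)) * conj (∑ k, a k ν * conj (w k))) / G ^ 2

/-- `∂/∂z_μ (g_k/|g|²)` at a point where `g = w` and `∂g_k/∂z_μ = a k μ`. -/
noncomputable def derivDivNormSq : Matrix m n ℂ :=
  let G : ℂ := ((∑ k, Complex.normSq (w k) : ℝ) : ℂ)
  of fun k μ => a k μ / G - w k * (∑ l, a l μ * conj (w l)) / G ^ 2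

variable {w}

theorem sum_mul_conj_eq_sum_normSq :
    ∑ k, w k * conj (w k) = ((∑ k, Complex.normSq (w k) : ℝ) : ℂ) := by
  push_cast
  exact Finset.sum_congr rfl fun k _ => Complex.mul_conj _

theorem transpose_derivDivNormSq_mulVec_star (hw : 0 < ∑ k, Complex.normSq (w k)) :
    (derivDivNormSq w a)ᵀ *ᵥ star w = 0 := by
  ext μ
  set G : ℂ := ((∑ k, Complex.normSq (w k) : ℝ) : ℂ) with hGdef
  have hG : G ≠ 0 := Complex.ofReal_ne_zero.mpr hw.ne'
  set b := ∑ l, a l μ * conj (w l)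
  calc ∑ k, derivDivNormSq w a k μ * conj (w k)
      = ∑ k, (a k μ * conj (w k) / G - b / G ^ 2 * (w k * conj (w k))) :=
        Finset.sum_congr rfl fun k _ => by simp only [derivDivNormSq, of_apply, ← hGdef]; ring
    _ = b / G - b / G ^ 2 * G := by
        rw [Finset.sum_sub_distrib, ← Finset.sum_div, ← Finset.mul_sum,
          sum_mul_conj_eq_sum_normSq]
    _ = 0 := by field_simp; ring

theorem smul_transpose_derivDivNormSq_mul_conjTranspose (hw : 0 < ∑ k, Complex.normSq (w k)) :
    ((∑ k, Complex.normSq (w k) : ℝ) : ℂ) • ((derivDivNormSq w a)ᵀ * (derivDivNormSq w a)ᵀᴴ) =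
      hessianLogNormSq w a := by
  ext μ ν
  set G : ℂ := ((∑ k, Complex.normSq (w k) : ℝ) : ℂ) with hGdef
  have hG : G ≠ 0 := Complex.ofReal_ne_zero.mpr hw.ne'
  have hGc : conj G = G := Complex.conj_ofReal _
  set b : n → ℂ := fun μ => ∑ k, a k μ * conj (w k)
  have hb : ∑ k, w k * conj (a k ν) = conj (b ν) := by
    simp [b, map_sum, mul_comm]
  have hD : ∑ k, derivDivNormSq w a k μ * conj (derivDivNormSq w a k ν) =
      (∑ k, a k μ * conj (a k ν)) / G ^ 2 - conj (b ν) / G ^ 3 * b μ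
        - b μ / G ^ 3 * conj (b ν) + b μ * conj (b ν) / G ^ 4 * G := by
    calc ∑ k, derivDivNormSq w a k μ * conj (derivDivNormSq w a k ν)
        = ∑ k, (a k μ * conj (a k ν) / G ^ 2 - conj (b ν) / G ^ 3 * (a k μ * conj (w k))
            - b μ / G ^ 3 * (w k * conj (a k ν))
            + b μ * conj (b ν) / G ^ 4 * (w k * conj (w k))) :=
          Finset.sum_congr rfl fun k _ => by
            simp only [derivDivNormSq, of_apply, ← hGdef, map_sub, map_div₀, map_mul, map_pow,
              hGc]
            ring
      _ = _ := by
          rw [Finset.sum_add_distrib, Finset.sum_sub_distrib, Finset.sum_sub_distrib,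
            ← Finset.sum_div, ← Finset.mul_sum, ← Finset.mul_sum, ← Finset.mul_sum, hb,
            sum_mul_conj_eq_sum_normSq]
  simp only [Matrix.smul_apply, mul_apply, transpose_apply, conjTranspose_apply, Complex.star_def,
    hessianLogNormSq, of_apply, ← hGdef, smul_eq_mul, hD]
  field_simp
  ring

end LeviForm

theorem rank_mul_transpose_derivDivNormSq_le {m n : ℕ} {w : Fin m → ℂ}
    (hw : 0 < ∑ k, Complex.normSq (w k)) (a ζ : Matrix (Fin m) (Fin n) ℂ) :
    (ζ * (derivDivNormSq w a)ᵀ).rank ≤ min n (m - 1) := by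
  have hw₀ : star w ≠ 0 := fun h => by simp [star_eq_zero.mp h] at hw
  have hker : (ζ * (derivDivNormSq w a)ᵀ) *ᵥ star w = 0 := by
    rw [← mulVec_mulVec, transpose_derivDivNormSq_mulVec_star a hw, mulVec_zero]
  have := rank_lt_card_width_of_mulVec_eq_zero hw₀ hker
  rw [Fintype.card_fin] at this
  exact le_min ((rank_mul_le_left _ _).trans (rank_le_width ζ)) (by omega)

theorem stmt_3_general (n m : ℕ)
    (g : Fin m → (Fin n → ℂ) → ℂ) (z₀ : Fin n → ℂ)
    (hpos : 0 < ∑ k, Complex.normSq (g k z₀))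
    (ζ : Fin m → Fin n → ℂ) (q : ℕ) (hq : q = min n (m - 1)) :
    let G : ℝ := ∑ k, Complex.normSq (g k z₀)
    let a : Fin m → Fin n → ℂ := fun k μ => fderiv ℂ (g k) z₀ (Pi.single μ 1)
    -- complex Hessian ∂²log|g|²/∂z_μ∂z̄_ν at z₀ (valid since g is holomorphic):
    let Hess : Fin n → Fin n → ℂ := fun μ ν =>
      ((G : ℂ) * ∑ k, a k μ * conj (a k ν) -
        (∑ k, a k μ * conj (g k z₀)) * conj (∑ k, a k ν * conj (g k z₀))) / (G : ℂ) ^ 2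
    -- ∂/∂z_μ (g_k/|g|²) at z₀:
    let D : Fin m → Fin n → ℂ := fun k μ =>
      a k μ / (G : ℂ) - g k z₀ * (∑ l, a l μ * conj (g l z₀)) / (G : ℂ) ^ 2
    G * Complex.normSq (∑ k, ∑ μ, D k μ * ζ k μ) ≤
      (q : ℝ) * (∑ k, ∑ μ, ∑ ν, Hess μ ν * ζ k μ * conj (ζ k ν)).re := by
  intro G a Hess D
  set w : Fin m → ℂ := fun k => g k z₀
  set M : Matrix (Fin m) (Fin m) ℂ := of ζ * (derivDivNormSq w a)ᵀ
  have hD : ∑ k, ∑ μ, D k μ * ζ k μ = M.trace := by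
    simp only [M, trace, diag, mul_apply, of_apply, transpose_apply]
    exact Finset.sum_congr rfl fun k _ => Finset.sum_congr rfl fun μ _ => mul_comm _ _
  have hHess : ∑ k, ∑ μ, ∑ ν, Hess μ ν * ζ k μ * conj (ζ k ν) =
      ((G * ∑ k, ∑ l, Complex.normSq (M k l) : ℝ) : ℂ) := by
    refine (trace_mul_mul_conjTranspose (of ζ) (hessianLogNormSq w a)).symm.trans ?_
    rw [← smul_transpose_derivDivNormSq_mul_conjTranspose a hpos, Complex.ofReal_mul,
      ofReal_sum_normSq_eq_trace_conjTranspose_mul_self, trace_mul_comm Mᴴ, conjTranspose_mul,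
      Matrix.mul_smul, Matrix.smul_mul, trace_smul, smul_eq_mul, Matrix.mul_assoc,
      Matrix.mul_assoc, Matrix.mul_assoc]
  have hrank : M.rank ≤ q := hq ▸ rank_mul_transpose_derivDivNormSq_le (w := w) hpos a (of ζ)
  rw [hD, hHess, Complex.ofReal_re]
  calc G * Complex.normSq M.trace ≤ G * (M.rank * ∑ k, ∑ l, Complex.normSq (M k l)) :=
        mul_le_mul_of_nonneg_left (normSq_trace_le_rank_mul_sum_normSq M) hpos.le
    _ ≤ G * (q * ∑ k, ∑ l, Complex.normSq (M k l)) := by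
        gcongr
        exact Finset.sum_nonneg fun _ _ => Finset.sum_nonneg fun _ _ => Complex.normSq_nonneg _
    _ = q * (G * ∑ k, ∑ l, Complex.normSq (M k l)) := by ring

/-- Skoda's pointwise inequality (Lemma 5.1).  At a point `z₀` where the tuple
`g = (g₁,…,g_m)` of holomorphic functions satisfies `|g| > 0`, with
`a k μ = ∂g_k/∂z_μ`, the complex Hessian of `log|g|²` is
`H μ ν = (|g|² Σ_k a_{kμ} ā_{kν} − (Σ_k a_{kμ} ḡ_k)(Σ_k ā_{kν} g_k))/|g|⁴`
and `∂/∂z_μ(g_k/|g|²) = a_{kμ}/|g|² − g_k (Σ_l a_{lμ} ḡ_l)/|g|⁴`.  Then for any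
`m×n` matrix `ζ` and `q = min{n, m−1}`,
`q·Σ_{k,μ,ν} H_{μν} ζ_{kμ} ζ̄_{kν} ≥ |g|²·|Σ_{k,μ} ∂/∂z_μ(g_k/|g|²) ζ_{kμ}|²`. -/
theorem stmt_3 (n m : ℕ) (hm : 1 ≤ m)
    (g : Fin m → (Fin n → ℂ) → ℂ) (z₀ : Fin n → ℂ)
    (hg : ∀ k, DifferentiableAt ℂ (g k) z₀)
    (hpos : 0 < ∑ k, Complex.normSq (g k z₀))
    (ζ : Fin m → Fin n → ℂ) (q : ℕ) (hq : q = min n (m - 1)) :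
    let G : ℝ := ∑ k, Complex.normSq (g k z₀)
    let a : Fin m → Fin n → ℂ := fun k μ => fderiv ℂ (g k) z₀ (Pi.single μ 1)
    -- complex Hessian ∂²log|g|²/∂z_μ∂z̄_ν at z₀ (valid since g is holomorphic):
    let Hess : Fin n → Fin n → ℂ := fun μ ν =>
      ((G : ℂ) * ∑ k, a k μ * conj (a k ν) -
        (∑ k, a k μ * conj (g k z₀)) * conj (∑ k, a k ν * conj (g k z₀))) / (G : ℂ) ^ 2
    -- ∂/∂z_μ (g_k/|g|²) at z₀:
    let D : Fin m → Fin n → ℂ := fun k μ =>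
      a k μ / (G : ℂ) - g k z₀ * (∑ l, a l μ * conj (g l z₀)) / (G : ℂ) ^ 2
    G * Complex.normSq (∑ k, ∑ μ, D k μ * ζ k μ) ≤
      (q : ℝ) * (∑ k, ∑ μ, ∑ ν, Hess μ ν * ζ k μ * conj (ζ k ν)).re :=
  stmt_3_general n m g z₀ hpos ζ q hq
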